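/- arXiv:1201.6559 — 3 statements merged into one kernel-verified Lean document; each statement's English description precedes it below -/
import Mathlib

section
/- Let p be a prime with p > 3. Then (-1)^((p-1)/2) · C(p-1, (p-1)/2) ≡ 4^(p-1) (mod p^3) (Morley's congruence). -/
/-!
Write `p = 2m + 1`. Modulo `p³`, `(-1)^m C(2m, m) = ∏_{k ≤ m} (1 - p/k)`, and
`C(2m, m) = 2^m ∏_{k ≤ m} (2k - 1)/k` with `2k - 1 = p - 2(m + 1 - k)` gives
`(-1)^m C(2m, m) = 4^m ∏_{k ≤ m} (1 - p/(2k))`. Since `∑_{k ≤ m} 1/k² ≡ 0 (mod p)` (half of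
`∑_{x ∈ 𝔽_p} x⁻² = ∑_{x ∈ 𝔽_p} x² = 0`), both products agree modulo `p³` with the truncated
exponentials of `-p H_m` and `-p H_m / 2`. So the first product is the square of the second; the
second is a unit, hence equal to `4^m`, and the first equals `4^(2m) = 4^(p-1)`.
-/

open Finset Nat

section NilpotentProducts

variable {R ι : Type*} [CommRing R] (s : Finset ι) (f : ι → R) {P : R}

theorem two_mul_prod_one_sub_mul (hP : P ^ 3 = 0) :
    2 * ∏ i ∈ s, (1 - P * f i) =
      2 - 2 * (P * ∑ i ∈ s, f i) + (P * ∑ i ∈ s, f i) ^ 2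
        - P ^ 2 * ∑ i ∈ s, f i ^ 2 := by
  classical
  induction s using Finset.induction_on with
  | empty => simp
  | insert a s ha ih =>
    rw [prod_insert ha, sum_insert ha, sum_insert ha]
    linear_combination (1 - P * f a) * ih
      + (f a * (∑ i ∈ s, f i ^ 2 - (∑ i ∈ s, f i) ^ 2)) * hP

theorem prod_one_sub_mul_eq_sq {h : R} (hP : P ^ 3 = 0) (hh : 2 * h = 1)
    (hf : P ^ 2 * ∑ i ∈ s, f i ^ 2 = 0) :
    ∏ i ∈ s, (1 - P * f i) = (∏ i ∈ s, (1 - P * h * f i)) ^ 2 := by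
  set X := ∏ i ∈ s, (1 - P * f i)
  set Y := ∏ i ∈ s, (1 - P * h * f i)
  set z := P * ∑ i ∈ s, f i
  have hz : z ^ 3 = 0 := by rw [mul_pow, hP, zero_mul]
  have hX : 2 * X = 2 - 2 * z + z ^ 2 := by
    linear_combination two_mul_prod_one_sub_mul s f hP - hf
  have hY : 2 * Y = 2 - 2 * h * z + h ^ 2 * z ^ 2 := by
    have hPh : (P * h) ^ 3 = 0 := by rw [mul_pow, hP, zero_mul]
    linear_combination two_mul_prod_one_sub_mul s f hPh - h ^ 2 * hf
  have h4 : 4 * X = 4 * Y ^ 2 := by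
    linear_combination 2 * hX - (2 * Y + 2 - 2 * h * z + h ^ 2 * z ^ 2) * hY
      + (4 * z - 2 * z ^ 2 * (2 * h + 1)) * hh - (h ^ 4 * z - 4 * h ^ 3) * hz
  linear_combination h ^ 2 * h4 - (X - Y ^ 2) * (2 * h + 1) * hh

theorem isUnit_prod_one_sub_mul (hP : IsNilpotent P) : IsUnit (∏ i ∈ s, (1 - P * f i)) :=
  IsUnit.prod_iff.2 fun i _ => ((Commute.all P (f i)).isNilpotent_mul_right hP).isUnit_one_sub

theorem prod_sub_mul_eq_pow_mul_prod_mul_prod (x y : ι → R) (hxy : ∀ i ∈ s, x i * y i = 1)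
    {c d : R} (hcd : c * d = 1) :
    ∏ i ∈ s, (P - c * x i) =
      (-c) ^ #s * (∏ i ∈ s, x i) * ∏ i ∈ s, (1 - P * d * y i) := by
  rw [← prod_const, ← prod_mul_distrib, ← prod_mul_distrib]
  refine prod_congr rfl fun i hi => ?_
  linear_combination (-P) * hcd - P * c * d * hxy i hi

end NilpotentProducts

theorem ZMod.castHom_inv_of_isUnit {m n : ℕ} (h : m ∣ n) {x : ZMod n} (hx : IsUnit x) :
    ZMod.castHom h (ZMod m) x⁻¹ = (ZMod.castHom h (ZMod m) x)⁻¹ := by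
  refine (hx.map (ZMod.castHom h (ZMod m))).mul_left_cancel ?_
  rw [← map_mul, ZMod.mul_inv_of_unit x hx, map_one,
    ZMod.mul_inv_of_unit _ (hx.map (ZMod.castHom h (ZMod m)))]

theorem ZMod.pow_mul_eq_zero_of_castHom_eq_zero {p n : ℕ} {x : ZMod (p ^ (n + 1))}
    (hx : ZMod.castHom (dvd_pow_self p n.succ_ne_zero) (ZMod p) x = 0) :
    (p : ZMod (p ^ (n + 1))) ^ n * x = 0 := by
  obtain ⟨z, rfl⟩ := ZMod.intCast_surjective x
  rw [map_intCast, ZMod.intCast_zmod_eq_zero_iff_dvd] at hx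
  obtain ⟨c, rfl⟩ := hx
  rw [Int.cast_mul, Int.cast_natCast, ← mul_assoc, ← pow_succ, ← Nat.cast_pow,
    ZMod.natCast_self, zero_mul]

theorem ZMod.sum_range_natCast {n : ℕ} [NeZero n] {M : Type*} [AddCommMonoid M]
    (f : ZMod n → M) : ∑ k ∈ range n, f k = ∑ x, f x :=
  sum_nbij' (↑) ZMod.val (fun _ _ => mem_univ _) (fun x _ => mem_range.2 (ZMod.val_lt x))
    (fun _ hk => ZMod.val_cast_of_lt (mem_range.1 hk)) (fun x _ => ZMod.natCast_zmod_val x)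
    (fun _ _ => rfl)

theorem FiniteField.sum_inv_sq_eq_zero {K : Type*} [Field K] [Fintype K]
    (hK : 3 < Fintype.card K) : ∑ x : K, x⁻¹ ^ 2 = 0 := by
  rw [← FiniteField.sum_pow_lt_card_sub_one K 2 (by omega)]
  exact Equiv.sum_comp (Equiv.inv K) (· ^ 2)

theorem Nat.factorial_two_mul_eq_prod_odd (m : ℕ) :
    (2 * m)! = 2 ^ m * m ! * ∏ k ∈ range m, (2 * k + 1) := by
  induction m with
  | zero => simp
  | succ m ih =>
    rw [show 2 * (m + 1) = 2 * m + 1 + 1 by ring, factorial_succ, factorial_succ, ih,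
      prod_range_succ, factorial_succ]
    ring

theorem ZMod.isUnit_natCast_of_lt {p k : ℕ} (hp : p.Prime) (h0 : k ≠ 0) (hk : k < p) (n : ℕ) :
    IsUnit (k : ZMod (p ^ n)) :=
  (ZMod.isUnit_iff_coprime _ _).2 ((Nat.coprime_of_lt_prime h0 hk hp).symm.pow_right n)

theorem ZMod.isUnit_factorial_of_lt {p m : ℕ} (hp : p.Prime) (hm : m < p) (n : ℕ) :
    IsUnit (m ! : ZMod (p ^ n)) :=
  (ZMod.isUnit_iff_coprime _ _).2
    (((hp.coprime_iff_not_dvd).2 fun h => by rw [hp.dvd_factorial] at h; omega).symm.pow_right n)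

namespace Morley

variable {p m : ℕ}

theorem sum_range_inv_sq_eq_zero (hp : p.Prime) (hp3 : 3 < p) (hm : p = 2 * m + 1) :
    ∑ k ∈ range m, ((k + 1 : ℕ) : ZMod p)⁻¹ ^ 2 = 0 := by
  have := Fact.mk hp
  set g : ℕ → ZMod p := fun k => (k : ZMod p)⁻¹ ^ 2
  have hfull : ∑ k ∈ range p, g k = 0 := by
    rw [ZMod.sum_range_natCast (fun x => x⁻¹ ^ 2)]
    exact FiniteField.sum_inv_sq_eq_zero (by rwa [ZMod.card])
  have hreflect : ∀ k ∈ range m, g (m + 1 + (m - 1 - k)) = g (k + 1) := by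
    intro k hk
    have hsum : ((m + 1 + (m - 1 - k) : ℕ) : ZMod p) + ((k + 1 : ℕ) : ZMod p) = 0 := by
      rw [← Nat.cast_add, ZMod.natCast_eq_zero_iff]
      exact ⟨1, by simp at hk; omega⟩
    simp only [g, eq_neg_of_add_eq_zero_left hsum, inv_neg, neg_sq]
  have hsplit : ∑ k ∈ range p, g k = 2 * ∑ k ∈ range m, g (k + 1) := by
    rw [show range p = range (m + 1 + m) by congr 1; omega, sum_range_add, sum_range_succ',
      ← sum_range_reflect (fun k => g (m + 1 + k)) m, sum_congr rfl hreflect]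
    simp [g, two_mul]
  have h2 : (2 : ZMod p) ≠ 0 := by
    intro h
    have := (ZMod.natCast_eq_zero_iff 2 p).1 (by exact_mod_cast h)
    have := Nat.le_of_dvd two_pos this
    omega
  exact (mul_eq_zero.1 (hsplit ▸ hfull)).resolve_left h2

theorem prime_sq_mul_sum_range_inv_sq_eq_zero (hp : p.Prime) (hp3 : 3 < p)
    (hm : p = 2 * m + 1) :
    (p : ZMod (p ^ 3)) ^ 2 * ∑ k ∈ range m, ((k + 1 : ℕ) : ZMod (p ^ 3))⁻¹ ^ 2 = 0 := by
  apply ZMod.pow_mul_eq_zero_of_castHom_eq_zero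
  rw [map_sum, ← sum_range_inv_sq_eq_zero hp hp3 hm]
  refine sum_congr rfl fun k hk => ?_
  rw [map_pow, ZMod.castHom_inv_of_isUnit _
    (ZMod.isUnit_natCast_of_lt hp k.succ_ne_zero (by simp at hk; omega) 3), map_natCast]

theorem natCast_succ_mul_inv (hp : p.Prime) (hm : p = 2 * m + 1) (n : ℕ) :
    ∀ k ∈ range m, ((k + 1 : ℕ) : ZMod (p ^ n)) * ((k + 1 : ℕ) : ZMod (p ^ n))⁻¹ = 1 :=
  fun k hk => ZMod.mul_inv_of_unit _
    (ZMod.isUnit_natCast_of_lt hp k.succ_ne_zero (by simp at hk; omega) n)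

theorem choose_eq_neg_one_pow_mul_prod (hp : p.Prime) (hm : p = 2 * m + 1) (n : ℕ) :
    ((2 * m).choose m : ZMod (p ^ n)) =
      (-1) ^ m * ∏ k ∈ range m, (1 - p * ((k + 1 : ℕ) : ZMod (p ^ n))⁻¹) := by
  have hprod : ∏ k ∈ range m, ((p : ZMod (p ^ n)) - 1 * ((k + 1 : ℕ) : ZMod (p ^ n))) =
      m ! * (2 * m).choose m := by
    rw [← Nat.cast_mul, ← descFactorial_eq_factorial_mul_choose, descFactorial_eq_prod_range,
      Nat.cast_prod]
    refine prod_congr rfl fun k hk => ?_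
    rw [one_mul, eq_comm, eq_sub_iff_add_eq, ← Nat.cast_add]
    congr 1
    simp at hk
    omega
  rw [prod_sub_mul_eq_pow_mul_prod_mul_prod _ _ _ (natCast_succ_mul_inv hp hm n) (mul_one 1),
    card_range, ← Nat.cast_prod, prod_range_add_one_eq_factorial] at hprod
  refine (ZMod.isUnit_factorial_of_lt (m := m) hp (by omega) n).mul_left_cancel ?_
  simp only [mul_one] at hprod
  linear_combination -hprod

theorem choose_eq_neg_four_pow_mul_prod (hp : p.Prime) (hm : p = 2 * m + 1) (n : ℕ) :
    ((2 * m).choose m : ZMod (p ^ n)) =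
      (-4) ^ m * ∏ k ∈ range m, (1 - p * 2⁻¹ * ((k + 1 : ℕ) : ZMod (p ^ n))⁻¹) := by
  have h2 : IsUnit (2 : ZMod (p ^ n)) := by
    exact_mod_cast ZMod.isUnit_natCast_of_lt hp two_ne_zero (by have := hp.two_le; omega) n
  have hodd : ∏ k ∈ range m, ((2 * k + 1 : ℕ) : ZMod (p ^ n)) =
      ∏ k ∈ range m, ((p : ZMod (p ^ n)) - 2 * ((k + 1 : ℕ) : ZMod (p ^ n))) := by
    rw [← prod_range_reflect]
    refine prod_congr rfl fun k hk => ?_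
    have hsum : ((2 * (m - 1 - k) + 1 + 2 * (k + 1) : ℕ) : ZMod (p ^ n)) = p := by
      simp at hk
      congr 1
      omega
    push_cast at hsum ⊢
    linear_combination hsum
  have hfact :
      (2 : ZMod (p ^ n)) ^ m * m ! * ∏ k ∈ range m, ((2 * k + 1 : ℕ) : ZMod (p ^ n)) =
        (2 * m).choose m * m ! * m ! := by
    have hnat :
        2 ^ m * m ! * ∏ k ∈ range m, (2 * k + 1) = (2 * m).choose m * m ! * m ! := by
      rw [← factorial_two_mul_eq_prod_odd, two_mul, add_choose_mul_factorial_mul_factorial]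
    simpa using congrArg (Nat.cast : ℕ → ZMod (p ^ n)) hnat
  rw [hodd, prod_sub_mul_eq_pow_mul_prod_mul_prod _ _ _ (natCast_succ_mul_inv hp hm n)
    (ZMod.mul_inv_of_unit 2 h2), card_range, ← Nat.cast_prod,
    prod_range_add_one_eq_factorial] at hfact
  have hF := ZMod.isUnit_factorial_of_lt (m := m) hp (by omega) n
  refine (hF.mul hF).mul_left_cancel ?_
  have h4 : (-4 : ZMod (p ^ n)) ^ m = 2 ^ m * (-2) ^ m := by rw [← mul_pow]; norm_num
  rw [h4]
  linear_combination -hfact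

theorem neg_one_pow_mul_choose_eq_four_pow (hp : p.Prime) (hp3 : 3 < p) (hm : p = 2 * m + 1) :
    ((-1) ^ m * (2 * m).choose m : ZMod (p ^ 3)) = 4 ^ (2 * m) := by
  set y : ℕ → ZMod (p ^ 3) := fun k => ((k + 1 : ℕ) : ZMod (p ^ 3))⁻¹
  set A := ∏ k ∈ range m, (1 - p * y k)
  set B := ∏ k ∈ range m, (1 - p * 2⁻¹ * y k)
  have hP : (p : ZMod (p ^ 3)) ^ 3 = 0 := by rw [← Nat.cast_pow, ZMod.natCast_self]
  have hh : (2 : ZMod (p ^ 3)) * 2⁻¹ = 1 :=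
    ZMod.mul_inv_of_unit 2 (by exact_mod_cast ZMod.isUnit_natCast_of_lt hp two_ne_zero (by omega) 3)
  have hA : (-1) ^ m * (2 * m).choose m = A := by
    rw [choose_eq_neg_one_pow_mul_prod hp hm, ← mul_assoc, ← mul_pow, neg_one_mul, neg_neg,
      one_pow, one_mul]
  have hB : (-1) ^ m * (2 * m).choose m = 4 ^ m * B := by
    rw [choose_eq_neg_four_pow_mul_prod hp hm, ← mul_assoc, ← mul_pow, neg_one_mul, neg_neg]
  have hAB : A = B ^ 2 :=
    prod_one_sub_mul_eq_sq _ _ hP hh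
      (by simpa [y] using prime_sq_mul_sum_range_inv_sq_eq_zero hp hp3 hm)
  have hBu : IsUnit B :=
    isUnit_prod_one_sub_mul _ _ ((Commute.all _ _).isNilpotent_mul_right ⟨3, hP⟩)
  have hB4 : B = 4 ^ m := hBu.mul_right_cancel (by rw [← sq, ← hAB, ← hA, hB])
  rw [hA, hAB, hB4, ← pow_mul, mul_comm]

end Morley

theorem morley_congruence (p : ℕ) (hp : p.Prime) (hp3 : 3 < p) :
    ((-1) ^ ((p - 1) / 2) * ((p - 1).choose ((p - 1) / 2) : ℤ))
      ≡ 4 ^ (p - 1) [ZMOD (p : ℤ) ^ 3] := by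
  obtain ⟨m, hm⟩ := hp.odd_of_ne_two (by omega)
  rw [show p - 1 = 2 * m by omega, show 2 * m / 2 = m by omega]
  have key := Morley.neg_one_pow_mul_choose_eq_four_pow hp hp3 hm
  have := (ZMod.intCast_eq_intCast_iff ((-1) ^ m * ((2 * m).choose m : ℤ)) (4 ^ (2 * m))
    (p ^ 3)).1 (by push_cast; exact key)
  simpa using this
end

section
/- Let p be a prime with p > 3. Then in ZMod p^2, the sum of the inverses of the even integers i with 0 < i < p equals the negative of the sum of the inverses of the odd integers i with 0 < i < p (i.e., S_0 ≡ -S_1 mod p^2). -/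
-- sum of squares identity over ℤ
lemma six_mul_sum_sq (n : ℕ) :
    (∑ i ∈ Finset.range n, (i : ℤ) ^ 2) * 6 = n * (n - 1) * (2 * n - 1) := by
  induction n with
  | zero => simp
  | succ m ih =>
    rw [Finset.sum_range_succ, add_mul, ih]
    push_cast
    ring

-- sum of squares in ZMod p is zero for p prime > 3
lemma sum_sq_zmod (p : ℕ) (hp : p.Prime) (hp3 : 3 < p) :
    ∑ i ∈ Finset.range p, ((i : ZMod p)) ^ 2 = 0 := by
  have h6 : IsUnit (6 : ZMod p) := by
    have : ((6 : ℕ) : ZMod p) = (6 : ZMod p) := by norm_num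
    rw [← this, ZMod.isUnit_iff_coprime]
    have : ¬ p ∣ 6 := by
      intro h
      have := Nat.le_of_dvd (by norm_num) h
      interval_cases p <;> revert h hp <;> decide
    exact (Nat.coprime_comm.mp ((Nat.Prime.coprime_iff_not_dvd hp).mpr this))
  have key : (∑ i ∈ Finset.range p, ((i : ZMod p)) ^ 2) * 6 = 0 := by
    have := six_mul_sum_sq p
    have h2 : ((∑ i ∈ Finset.range p, (i : ℤ) ^ 2) * 6 : ℤ) = ((p : ℤ) * (p - 1) * (2 * p - 1)) := this
    calc (∑ i ∈ Finset.range p, ((i : ZMod p)) ^ 2) * 6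
        = (((∑ i ∈ Finset.range p, (i : ℤ) ^ 2) * 6 : ℤ) : ZMod p) := by push_cast; ring
      _ = (((p : ℤ) * (p - 1) * (2 * p - 1) : ℤ) : ZMod p) := by rw [h2]
      _ = 0 := by push_cast [ZMod.natCast_self]; ring
  exact (IsUnit.mul_left_eq_zero h6).mp key

lemma sum_inv_sq_zmod (p : ℕ) (hp : p.Prime) (hp3 : 3 < p) :
    ∑ i ∈ Finset.Ioo 0 p, ((i : ZMod p))⁻¹ ^ 2 = 0 := by
  haveI : Fact p.Prime := ⟨hp⟩
  have hne : ∀ a ∈ Finset.Ioo 0 p, ((a : ZMod p)) ≠ 0 := by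
    intro a ha
    simp only [Finset.mem_Ioo] at ha
    rw [Ne, ZMod.natCast_eq_zero_iff]
    intro h
    exact absurd (Nat.le_of_dvd ha.1 h) (not_le.mpr ha.2)
  have step1 : ∑ i ∈ Finset.Ioo 0 p, ((i : ZMod p))⁻¹ ^ 2
      = ∑ i ∈ Finset.Ioo 0 p, ((i : ZMod p)) ^ 2 := by
    refine Finset.sum_nbij' (fun i => (((i : ZMod p))⁻¹).val)
      (fun i => (((i : ZMod p))⁻¹).val) ?_ ?_ ?_ ?_ ?_
    · intro a ha
      simp only [Finset.mem_Ioo]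
      refine ⟨Nat.pos_of_ne_zero ?_, ZMod.val_lt _⟩
      rw [Ne, ZMod.val_eq_zero]
      exact inv_ne_zero (hne a ha)
    · intro a ha
      simp only [Finset.mem_Ioo]
      refine ⟨Nat.pos_of_ne_zero ?_, ZMod.val_lt _⟩
      rw [Ne, ZMod.val_eq_zero]
      exact inv_ne_zero (hne a ha)
    · intro a ha
      simp only [Finset.mem_Ioo] at ha
      show ((((((a : ZMod p))⁻¹.val : ℕ) : ZMod p))⁻¹).val = a
      rw [ZMod.natCast_zmod_val, inv_inv, ZMod.val_natCast_of_lt ha.2]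
    · intro a ha
      simp only [Finset.mem_Ioo] at ha
      show ((((((a : ZMod p))⁻¹.val : ℕ) : ZMod p))⁻¹).val = a
      rw [ZMod.natCast_zmod_val, inv_inv, ZMod.val_natCast_of_lt ha.2]
    · intro a _
      show ((a : ZMod p))⁻¹ ^ 2 = (((((a : ZMod p))⁻¹.val : ℕ) : ZMod p)) ^ 2
      rw [ZMod.natCast_zmod_val]
  have hIoo : Finset.Ioo 0 p = (Finset.range p).erase 0 := by
    ext i
    simp [Finset.mem_Ioo, Nat.pos_iff_ne_zero, and_comm]
  rw [step1, hIoo, Finset.sum_erase _ (by simp)]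
  exact sum_sq_zmod p hp hp3

lemma p_mul_eq_zero (p : ℕ) (hp : p ≠ 0) (x : ZMod (p ^ 2))
    (h : ((x.val : ℕ) : ZMod p) = 0) : (p : ZMod (p ^ 2)) * x = 0 := by
  haveI : NeZero (p ^ 2) := ⟨pow_ne_zero 2 hp⟩
  obtain ⟨k, hk⟩ := (ZMod.natCast_eq_zero_iff _ _).mp h
  calc (p : ZMod (p ^ 2)) * x = (p : ZMod (p ^ 2)) * ((x.val : ℕ) : ZMod (p ^ 2)) := by
        rw [ZMod.natCast_zmod_val]
    _ = ((p * x.val : ℕ) : ZMod (p ^ 2)) := by push_cast; ring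
    _ = 0 := by
        rw [ZMod.natCast_eq_zero_iff, hk]
        exact ⟨k, by ring⟩

theorem S0_eq_neg_S1 (p : ℕ) (hp : p.Prime) (hp3 : 3 < p) :
    ∑ i ∈ (Finset.Ioo 0 p).filter (fun i => Even i), ((i : ZMod (p ^ 2)))⁻¹
      = -∑ i ∈ (Finset.Ioo 0 p).filter (fun i => Odd i), ((i : ZMod (p ^ 2)))⁻¹ := by
  haveI : Fact p.Prime := ⟨hp⟩
  have hp0 : p ≠ 0 := hp.ne_zero
  haveI : NeZero (p ^ 2) := ⟨pow_ne_zero 2 hp0⟩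
  rw [eq_neg_iff_add_eq_zero]
  have hsplit : (∑ i ∈ (Finset.Ioo 0 p).filter (fun i => Even i), ((i : ZMod (p ^ 2)))⁻¹)
      + ∑ i ∈ (Finset.Ioo 0 p).filter (fun i => Odd i), ((i : ZMod (p ^ 2)))⁻¹
      = ∑ i ∈ Finset.Ioo 0 p, ((i : ZMod (p ^ 2)))⁻¹ := by
    have hfo : (Finset.Ioo 0 p).filter (fun i => Odd i)
        = (Finset.Ioo 0 p).filter (fun i => ¬ Even i) := by
      apply Finset.filter_congr
      intro i _
      exact (Nat.not_even_iff_odd).symm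
    rw [hfo, Finset.sum_filter_add_sum_filter_not]
  rw [hsplit]
  set S := ∑ i ∈ Finset.Ioo 0 p, ((i : ZMod (p ^ 2)))⁻¹ with hS
  have hcop : ∀ i : ℕ, 0 < i → i < p → Nat.Coprime i p := fun i h1 h2 =>
    Nat.coprime_comm.mp ((hp.coprime_iff_not_dvd).mpr fun h =>
      absurd (Nat.le_of_dvd h1 h) (not_le.mpr h2))
  have hu : ∀ i : ℕ, 0 < i → i < p → IsUnit ((i : ZMod (p ^ 2))) := fun i h1 h2 => by
    rw [ZMod.isUnit_iff_coprime]; exact (hcop i h1 h2).pow_right 2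
  have hrefl : ∑ i ∈ Finset.Ioo 0 p, (((p - i : ℕ) : ZMod (p ^ 2)))⁻¹ = S := by
    refine Finset.sum_nbij' (fun i => p - i) (fun i => p - i) ?_ ?_ ?_ ?_ ?_ <;>
      intro a ha <;> simp only [Finset.mem_Ioo] at * <;> first | omega | rfl
  set T := ∑ i ∈ Finset.Ioo 0 p,
    ((i : ZMod (p ^ 2)))⁻¹ * (((p - i : ℕ) : ZMod (p ^ 2)))⁻¹ with hT
  have key : ∀ i : ℕ, 0 < i → i < p →
      (((p - i : ℕ) : ZMod (p ^ 2)))⁻¹ + ((i : ZMod (p ^ 2)))⁻¹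
        = (p : ZMod (p ^ 2)) * (((i : ZMod (p ^ 2)))⁻¹ * (((p - i : ℕ) : ZMod (p ^ 2)))⁻¹) := by
    intro i h1 h2
    have ha := hu i h1 h2
    have hb := hu (p - i) (by omega) (by omega)
    have hab : ((i : ZMod (p ^ 2))) + (((p - i : ℕ) : ZMod (p ^ 2))) = (p : ZMod (p ^ 2)) := by
      rw [← Nat.cast_add]; congr 1; omega
    set a := ((i : ZMod (p ^ 2)))
    set b := (((p - i : ℕ) : ZMod (p ^ 2)))
    have h1' : a * a⁻¹ = 1 := ZMod.mul_inv_of_unit a ha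
    have h2' : b * b⁻¹ = 1 := ZMod.mul_inv_of_unit b hb
    calc b⁻¹ + a⁻¹ = (a * a⁻¹) * b⁻¹ + (b * b⁻¹) * a⁻¹ := by rw [h1', h2']; ring
      _ = (a + b) * (a⁻¹ * b⁻¹) := by ring
      _ = (p : ZMod (p ^ 2)) * (a⁻¹ * b⁻¹) := by rw [hab]
  have h2S : (2 : ZMod (p ^ 2)) * S = (p : ZMod (p ^ 2)) * T := by
    rw [two_mul, hT, Finset.mul_sum]
    nth_rewrite 1 [← hrefl]
    rw [hS, ← Finset.sum_add_distrib]
    apply Finset.sum_congr rfl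
    intro i hi
    simp only [Finset.mem_Ioo] at hi
    exact key i hi.1 hi.2
  have hpT : (p : ZMod (p ^ 2)) * T = 0 := by
    apply p_mul_eq_zero p hp0
    set φ := ZMod.castHom (dvd_pow_self p two_ne_zero) (ZMod p) with hφ
    have hval : ((T.val : ℕ) : ZMod p) = φ T := by
      rw [hφ, ZMod.castHom_apply, ZMod.natCast_val]
    rw [hval]
    have hφinv : ∀ j : ℕ, IsUnit ((j : ZMod (p ^ 2))) →
        φ (((j : ZMod (p ^ 2)))⁻¹) = ((j : ZMod p))⁻¹ := by
      intro j hj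
      apply eq_inv_of_mul_eq_one_left
      rw [← map_natCast φ j, ← map_mul, ZMod.inv_mul_of_unit _ hj, map_one]
    rw [hT, map_sum]
    have hterm : ∀ i ∈ Finset.Ioo 0 p,
        φ (((i : ZMod (p ^ 2)))⁻¹ * (((p - i : ℕ) : ZMod (p ^ 2)))⁻¹)
          = -(((i : ZMod p))⁻¹ ^ 2) := by
      intro i hi
      simp only [Finset.mem_Ioo] at hi
      rw [map_mul, hφinv i (hu i hi.1 hi.2), hφinv (p - i) (hu (p - i) (by omega) (by omega))]
      have : (((p - i : ℕ) : ZMod p)) = -((i : ZMod p)) := by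
        rw [Nat.cast_sub hi.2.le, ZMod.natCast_self, zero_sub]
      rw [this, inv_neg]
      ring
    rw [Finset.sum_congr rfl hterm, Finset.sum_neg_distrib, sum_inv_sq_zmod p hp hp3, neg_zero]
  have h2u : IsUnit (2 : ZMod (p ^ 2)) := by
    have : ((2 : ℕ) : ZMod (p ^ 2)) = (2 : ZMod (p ^ 2)) := by norm_num
    rw [← this, ZMod.isUnit_iff_coprime]
    exact (Nat.coprime_two_left.mpr (hp.odd_of_ne_two (by omega))).pow_right 2
  exact (IsUnit.mul_right_eq_zero h2u).mp (h2S.trans hpT)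
end

section
/- Let p be a prime with p > 3. Then in ZMod p, S_10 = 0, where S_10 is the sum of 1/(ij) over pairs 0 < i < j < p with i odd and j even. Moreover S_10 = -S_01 - S_0^2 in ZMod p, where S_01 is the sum of 1/(ij) over pairs 0 < i < j < p with i even and j odd, and S_0 is the sum of 1/i over even i with 0 < i < p. -/
open Finset

lemma cast_ne_zero_of_lt {p : ℕ} (hp : p.Prime) {k : ℕ} (h0 : 0 < k) (hk : k < p) :
    (k : ZMod p) ≠ 0 := by
  haveI : NeZero p := ⟨hp.pos.ne'⟩
  intro h
  rw [ZMod.natCast_eq_zero_iff] at h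
  exact absurd (Nat.le_of_dvd h0 h) (not_le.mpr hk)

lemma L1 (p : ℕ) (a b : ℕ → Prop) [DecidablePred a] [DecidablePred b]
    (f : ℕ → ℕ → ZMod p) :
    (∑ i ∈ (Finset.Ioo 0 p).filter a, ∑ j ∈ (Finset.Ioo i p).filter b, f i j)
      = ∑ q ∈ (((Finset.Ioo 0 p).filter a) ×ˢ ((Finset.Ioo 0 p).filter b)).filter
          (fun q => q.1 < q.2), f q.1 q.2 := by
  conv_rhs => rw [Finset.sum_filter, Finset.sum_product]
  refine Finset.sum_congr rfl (fun i hi => ?_)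
  simp only [← Finset.sum_filter]
  congr 1
  ext j
  simp only [Finset.mem_filter, Finset.mem_Ioo]
  constructor
  · rintro ⟨⟨h1, h2⟩, h3⟩
    exact ⟨⟨⟨Nat.pos_of_ne_zero (by omega), h2⟩, h3⟩, h1⟩
  · rintro ⟨⟨⟨h0, h2⟩, h3⟩, h1⟩
    exact ⟨⟨h1, h2⟩, h3⟩

theorem S10_value (p : ℕ) (hp : p.Prime) (hp3 : 3 < p) :
    ((∑ i ∈ (Finset.Ioo 0 p).filter (fun i => Odd i),
        ∑ j ∈ (Finset.Ioo i p).filter (fun j => Even j),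
          ((i : ZMod p) * (j : ZMod p))⁻¹) = 0) ∧
    ((∑ i ∈ (Finset.Ioo 0 p).filter (fun i => Odd i),
        ∑ j ∈ (Finset.Ioo i p).filter (fun j => Even j),
          ((i : ZMod p) * (j : ZMod p))⁻¹)
      = -(∑ i ∈ (Finset.Ioo 0 p).filter (fun i => Even i),
          ∑ j ∈ (Finset.Ioo i p).filter (fun j => Odd j),
            ((i : ZMod p) * (j : ZMod p))⁻¹)
        - (∑ i ∈ (Finset.Ioo 0 p).filter (fun i => Even i), ((i : ZMod p))⁻¹) ^ 2) := by
  haveI : Fact p.Prime := ⟨hp⟩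
  have hpodd : p % 2 = 1 := Nat.odd_iff.mp (hp.odd_of_ne_two (by omega))
  set A : Finset ℕ := (Finset.Ioo 0 p).filter (fun i => Odd i) with hA
  set B : Finset ℕ := (Finset.Ioo 0 p).filter (fun i => Even i) with hB
  set F : ℕ × ℕ → ZMod p := fun q => ((q.1 : ZMod p) * (q.2 : ZMod p))⁻¹ with hF
  have hFap : ∀ i j : ℕ, F (i, j) = ((i : ZMod p) * (j : ZMod p))⁻¹ := fun _ _ => rfl
  set T : Finset (ℕ × ℕ) := (A ×ˢ B).filter (fun q => q.1 < q.2) with hT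
  set T' : Finset (ℕ × ℕ) := (B ×ˢ A).filter (fun q => q.1 < q.2) with hT'
  have memT : ∀ i j : ℕ, (i, j) ∈ T ↔
      i % 2 = 1 ∧ j % 2 = 0 ∧ 0 < i ∧ i < j ∧ j < p := by
    intro i j
    simp only [hT, hA, hB, Finset.mem_filter, Finset.mem_product, Finset.mem_Ioo,
      Nat.odd_iff, Nat.even_iff]
    omega
  have memT' : ∀ i j : ℕ, (i, j) ∈ T' ↔
      i % 2 = 0 ∧ j % 2 = 1 ∧ 0 < i ∧ i < j ∧ j < p := by
    intro i j
    simp only [hT', hA, hB, Finset.mem_filter, Finset.mem_product, Finset.mem_Ioo,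
      Nat.odd_iff, Nat.even_iff]
    omega
  have e10 : (∑ i ∈ (Finset.Ioo 0 p).filter (fun i => Odd i),
        ∑ j ∈ (Finset.Ioo i p).filter (fun j => Even j),
          ((i : ZMod p) * (j : ZMod p))⁻¹) = ∑ q ∈ T, F q :=
    L1 p _ _ _
  have e01 : (∑ i ∈ (Finset.Ioo 0 p).filter (fun i => Even i),
        ∑ j ∈ (Finset.Ioo i p).filter (fun j => Odd j),
          ((i : ZMod p) * (j : ZMod p))⁻¹) = ∑ q ∈ T', F q :=
    L1 p _ _ _
  have hne : ∀ {k : ℕ}, 0 < k → k < p → (k : ZMod p) ≠ 0 :=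
    fun h1 h2 => cast_ne_zero_of_lt hp h1 h2
  -- Part 1 : ∑ T F = 0
  have hS0 : ∑ q ∈ T, F q = 0 := by
    set S : ZMod p := ∑ q ∈ T, F q with hS
    have step1 : (∑ q ∈ T, (((q.2 - q.1 : ℕ) : ZMod p) * (q.2 : ZMod p))⁻¹) = S := by
      rw [hS]
      refine Finset.sum_nbij' (fun q => (q.2 - q.1, q.2)) (fun q => (q.2 - q.1, q.2))
        ?_ ?_ ?_ ?_ ?_
      · rintro ⟨i, j⟩ hq
        rw [memT] at hq
        dsimp only
        rw [memT]
        omega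
      · rintro ⟨i, j⟩ hq
        rw [memT] at hq
        dsimp only
        rw [memT]
        omega
      · rintro ⟨i, j⟩ hq
        rw [memT] at hq
        dsimp only
        rw [Prod.mk.injEq]
        omega
      · rintro ⟨i, j⟩ hq
        rw [memT] at hq
        dsimp only
        rw [Prod.mk.injEq]
        omega
      · rintro ⟨i, j⟩ hq
        rfl
    have step2 : S + S = ∑ q ∈ T, ((q.1 : ZMod p) * ((q.2 - q.1 : ℕ) : ZMod p))⁻¹ := by
      nth_rewrite 2 [← step1]
      rw [hS, ← Finset.sum_add_distrib]
      refine Finset.sum_congr rfl ?_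
      rintro ⟨i, j⟩ hq
      rw [memT] at hq
      obtain ⟨hi1, hj0, h0, hij, hjp⟩ := hq
      rw [hFap]
      dsimp only
      have hia : (i : ZMod p) ≠ 0 := hne h0 (by omega)
      have hja : (j : ZMod p) ≠ 0 := hne (by omega) hjp
      have hd : ((j - i : ℕ) : ZMod p) = (j : ZMod p) - (i : ZMod p) :=
        Nat.cast_sub (le_of_lt hij)
      have hda : ((j - i : ℕ) : ZMod p) ≠ 0 := hne (by omega) (by omega)
      rw [hd] at hda ⊢
      field_simp
      ring
    have step3 : (∑ q ∈ T, ((q.1 : ZMod p) * ((q.2 - q.1 : ℕ) : ZMod p))⁻¹) = -S := by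
      have key : (∑ q ∈ T, ((q.1 : ZMod p) * ((q.2 - q.1 : ℕ) : ZMod p))⁻¹)
          = ∑ q ∈ T, -F q := by
        refine Finset.sum_nbij' (fun q => (q.1, p + q.1 - q.2)) (fun q => (q.1, p + q.1 - q.2))
          ?_ ?_ ?_ ?_ ?_
        · rintro ⟨i, j⟩ hq
          rw [memT] at hq
          dsimp only
          rw [memT]
          omega
        · rintro ⟨i, j⟩ hq
          rw [memT] at hq
          dsimp only
          rw [memT]
          omega
        · rintro ⟨i, j⟩ hq
          rw [memT] at hq
          dsimp only
          rw [Prod.mk.injEq]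
          omega
        · rintro ⟨i, j⟩ hq
          rw [memT] at hq
          dsimp only
          rw [Prod.mk.injEq]
          omega
        · rintro ⟨i, j⟩ hq
          rw [memT] at hq
          obtain ⟨hi1, hj0, h0, hij, hjp⟩ := hq
          dsimp only
          rw [hFap]
          have c1 : ((p + i - j : ℕ) : ZMod p) = (i : ZMod p) - (j : ZMod p) := by
            rw [Nat.cast_sub (by omega : j ≤ p + i)]
            push_cast
            rw [ZMod.natCast_self]
            ring
          have c2 : ((j - i : ℕ) : ZMod p) = (j : ZMod p) - (i : ZMod p) :=
            Nat.cast_sub (le_of_lt hij)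
          rw [c1, c2]
          rw [show ((i : ZMod p) * ((i : ZMod p) - (j : ZMod p)))
              = -((i : ZMod p) * ((j : ZMod p) - (i : ZMod p))) by ring, inv_neg, neg_neg]
      rw [key, Finset.sum_neg_distrib, hS]
    have h3S : (3 : ZMod p) * S = 0 := by
      linear_combination step2.trans step3
    have h3ne : (3 : ZMod p) ≠ 0 := by
      have := hne (k := 3) (by norm_num) (by omega)
      simpa using this
    rcases mul_eq_zero.mp h3S with h | h
    · exact absurd h h3ne
    · exact h
  refine ⟨by rw [e10]; exact hS0, ?_⟩
  -- Part 2
  have hfull : (∑ i ∈ Finset.Ioo 0 p, ((i : ZMod p))⁻¹) = 0 := by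
    have hrev : (∑ i ∈ Finset.Ioo 0 p, ((i : ZMod p))⁻¹)
        = ∑ i ∈ Finset.Ioo 0 p, -((i : ZMod p))⁻¹ := by
      refine Finset.sum_nbij' (fun i => p - i) (fun i => p - i) ?_ ?_ ?_ ?_ ?_
      · intro i hi; rw [Finset.mem_Ioo] at hi; rw [Finset.mem_Ioo]; omega
      · intro i hi; rw [Finset.mem_Ioo] at hi; rw [Finset.mem_Ioo]; omega
      · intro i hi; rw [Finset.mem_Ioo] at hi; omega
      · intro i hi; rw [Finset.mem_Ioo] at hi; omega
      · intro i hi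
        rw [Finset.mem_Ioo] at hi
        have h2 : ((p - i : ℕ) : ZMod p) = -(i : ZMod p) := by
          rw [Nat.cast_sub (le_of_lt hi.2), ZMod.natCast_self]
          ring
        rw [h2, inv_neg, neg_neg]
    have h2 : (2 : ZMod p) * (∑ i ∈ Finset.Ioo 0 p, ((i : ZMod p))⁻¹) = 0 := by
      rw [Finset.sum_neg_distrib] at hrev
      linear_combination hrev
    have h2ne : (2 : ZMod p) ≠ 0 := by
      have := hne (k := 2) (by norm_num) (by omega)
      simpa using this
    rcases mul_eq_zero.mp h2 with h | h
    · exact absurd h h2ne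
    · exact h
  have hsplit : (∑ i ∈ A, ((i : ZMod p))⁻¹) + (∑ i ∈ B, ((i : ZMod p))⁻¹) = 0 := by
    rw [← hfull, hA, hB]
    have : (Finset.Ioo 0 p).filter (fun i => Even i)
        = (Finset.Ioo 0 p).filter (fun i => ¬ Odd i) := by
      apply Finset.filter_congr
      intro x _
      simp [Nat.not_odd_iff_even]
    rw [this]
    exact Finset.sum_filter_add_sum_filter_not _ _ _
  have hprod : (∑ i ∈ A, ((i : ZMod p))⁻¹) * (∑ i ∈ B, ((i : ZMod p))⁻¹)
      = ∑ q ∈ A ×ˢ B, F q := by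
    rw [Finset.sum_mul_sum, Finset.sum_product]
    simp only [hF, mul_inv]
  have hswap : (∑ q ∈ (A ×ˢ B).filter (fun q => ¬ q.1 < q.2), F q) = ∑ q ∈ T', F q := by
    refine Finset.sum_nbij' (fun q => (q.2, q.1)) (fun q => (q.2, q.1)) ?_ ?_ ?_ ?_ ?_
    · rintro ⟨i, j⟩ hq
      simp only [hA, hB, Finset.mem_filter, Finset.mem_product, Finset.mem_Ioo,
        Nat.odd_iff, Nat.even_iff] at hq
      dsimp only
      rw [memT']
      omega
    · rintro ⟨i, j⟩ hq
      rw [memT'] at hq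
      simp only [hA, hB, Finset.mem_filter, Finset.mem_product, Finset.mem_Ioo,
        Nat.odd_iff, Nat.even_iff]
      omega
    · rintro ⟨i, j⟩ _; rfl
    · rintro ⟨i, j⟩ _; rfl
    · rintro ⟨i, j⟩ _
      dsimp only
      rw [hFap, hFap, mul_comm]
  have hpart : (∑ q ∈ T, F q) + (∑ q ∈ T', F q) = ∑ q ∈ A ×ˢ B, F q := by
    rw [← hswap, hT]
    exact Finset.sum_filter_add_sum_filter_not _ _ _
  rw [e10, e01, hS0]
  have hB2 : (∑ i ∈ (Finset.Ioo 0 p).filter (fun i => Even i), ((i : ZMod p))⁻¹)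
      = ∑ i ∈ B, ((i : ZMod p))⁻¹ := by rw [hB]
  rw [hB2]
  have hS1 : (∑ i ∈ A, ((i : ZMod p))⁻¹) = -(∑ i ∈ B, ((i : ZMod p))⁻¹) := by
    linear_combination hsplit
  have hT'val : (∑ q ∈ T', F q) = -(∑ i ∈ B, ((i : ZMod p))⁻¹) ^ 2 := by
    have := hpart
    rw [hS0, zero_add, ← hprod, hS1] at this
    rw [this]; ring
  rw [hT'val]
  ring
end
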